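/- arXiv:2601.16554 — 2 statements merged into one kernel-verified Lean document; each statement's English description precedes it below -/
import Mathlib

section
/- For every λ > 0, the integral over [-π, π] of exp(−2λ sin²(t/2)) dt is at most (π/√(3λ))·(1 + √(π/2)). -/
open Real MeasureTheory

/-!
Jordan's inequality `cos t ≤ 1 - 2 t² / π²` on `[-π, π]` gives `sin² (t / 2) ≥ t² / π²`, so the
integrand is dominated by the Gaussian `exp (-(2λ / π²) t²)`, whose integral over `ℝ` is
`√(π³ / (2λ)) = π / √(3λ) · √(3π / 2)`. It remains to check `3π / 2 ≤ (1 + √(π / 2))²`,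
i.e. `π ≤ 1 + 2 √(π / 2)`.
-/

lemma sq_div_pi_sq_le_sin_half_sq {x : ℝ} (hx : |x| ≤ π) : x ^ 2 / π ^ 2 ≤ sin (x / 2) ^ 2 := by
  have hcos := cos_le_one_sub_mul_cos_sq hx
  have hsin := sin_sq_eq_half_sub (x / 2)
  rw [mul_div_cancel₀ x two_ne_zero] at hsin
  rw [hsin]
  linarith [show 2 / π ^ 2 * x ^ 2 = 2 * (x ^ 2 / π ^ 2) by ring]

lemma intervalIntegral_exp_neg_mul_sq_le {c a b : ℝ} (hc : 0 < c) (hab : a ≤ b) :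
    ∫ x in a..b, exp (-c * x ^ 2) ≤ √(π / c) := by
  rw [← integral_gaussian, intervalIntegral.integral_of_le hab]
  exact setIntegral_le_integral (integrable_exp_neg_mul_sq hc)
    (.of_forall fun _ ↦ (exp_pos _).le)

lemma sqrt_three_mul_pi_div_two_le : √(3 * π / 2) ≤ 1 + √(π / 2) := by
  have ha : √(π / 2) ^ 2 = π / 2 := sq_sqrt (by positivity)
  rw [sqrt_le_left (by positivity)]
  nlinarith [sqrt_nonneg (π / 2), pi_gt_d2, pi_lt_d2]

lemma sqrt_pi_div_two_mul_div_pi_sq_eq {l : ℝ} (hl : 0 < l) :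
    √(π / (2 * l / π ^ 2)) = π / √(3 * l) * √(3 * π / 2) := by
  have h : π / (2 * l / π ^ 2) = (π / √(3 * l)) ^ 2 * (3 * π / 2) := by
    rw [div_pow, sq_sqrt (by positivity)]
    field_simp
  rw [h, sqrt_mul (by positivity), sqrt_sq (by positivity)]

theorem stmt2 (l : ℝ) (hl : 0 < l) :
    (∫ t in (-Real.pi)..Real.pi, Real.exp (-2 * l * (Real.sin (t / 2)) ^ 2))
      ≤ Real.pi / Real.sqrt (3 * l) * (1 + Real.sqrt (Real.pi / 2)) := by
  have hpointwise : ∀ t ∈ Set.Icc (-π) π,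
      exp (-2 * l * sin (t / 2) ^ 2) ≤ exp (-(2 * l / π ^ 2) * t ^ 2) := fun t ht ↦ by
    have := mul_le_mul_of_nonneg_left (sq_div_pi_sq_le_sin_half_sq (abs_le.mpr ht))
      (by positivity : 0 ≤ 2 * l)
    rw [exp_le_exp]
    linarith [show -(2 * l / π ^ 2) * t ^ 2 = -(2 * l * (t ^ 2 / π ^ 2)) by ring]
  have hpi : -π ≤ π := by linarith [pi_pos]
  calc ∫ t in (-π)..π, exp (-2 * l * sin (t / 2) ^ 2)
      ≤ ∫ t in (-π)..π, exp (-(2 * l / π ^ 2) * t ^ 2) :=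
        intervalIntegral.integral_mono_on hpi (Continuous.intervalIntegrable (by fun_prop) _ _)
          (Continuous.intervalIntegrable (by fun_prop) _ _) hpointwise
    _ ≤ √(π / (2 * l / π ^ 2)) := intervalIntegral_exp_neg_mul_sq_le (by positivity) hpi
    _ = π / √(3 * l) * √(3 * π / 2) := sqrt_pi_div_two_mul_div_pi_sq_eq hl
    _ ≤ π / √(3 * l) * (1 + √(π / 2)) := by gcongr; exact sqrt_three_mul_pi_div_two_le
end

section
/- Bergström identity: Let F be a probability distribution on ℝ^d, D a finite signed measure with D{ℝ^d} = 1, n ∈ ℕ, and 0 ≤ k ≤ n−1. Then F^{*n} − ∑_{m=0}^{k} C(n,m)·D^{*(n−m)}*(F−D)^{*m} = ∑_{m=k+1}^{n} C(m−1,k)·F^{*(n−m)}*(F−D)^{*(k+1)}*D^{*(m−k−1)}, where all powers are convolution powers. -/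
open MeasureTheory

variable {G : Type*} [AddCommMonoid G] [MeasurableSpace G]

/-- Convolution of finite signed measures, via Jordan decomposition. -/
noncomputable def sconv (M V : SignedMeasure G) : SignedMeasure G :=
  ((M.toJordanDecomposition.posPart.conv V.toJordanDecomposition.posPart +
      M.toJordanDecomposition.negPart.conv V.toJordanDecomposition.negPart).toSignedMeasure) -
  ((M.toJordanDecomposition.posPart.conv V.toJordanDecomposition.negPart +
      M.toJordanDecomposition.negPart.conv V.toJordanDecomposition.posPart).toSignedMeasure)

/-- Dirac (point mass) as a signed measure. -/
noncomputable def diracSM (a : G) : SignedMeasure G := (Measure.dirac a).toSignedMeasure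

/-- Convolution powers, with the 0th power the point mass at 0. -/
noncomputable def convPow (M : SignedMeasure G) : ℕ → SignedMeasure G
  | 0 => diracSM 0
  | n + 1 => sconv (convPow M n) M

/-- Total variation norm. -/
noncomputable def tvnorm (M : SignedMeasure G) : ℝ := (M.totalVariation Set.univ).toReal

/-- Setwise sum of a family of signed measures (when it exists). -/
noncomputable def seriesSM {ι : Type*} (g : ι → SignedMeasure G) : SignedMeasure G := by
  classical
  exact if h : ∃ E : SignedMeasure G, ∀ A : Set G, MeasurableSet A → E A = ∑' i, g i A then
    h.choose else 0

/-- Exponential of a finite signed measure: `exp M = ∑ M^{*j}/j!`. -/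
noncomputable def expSM (M : SignedMeasure G) : SignedMeasure G :=
  seriesSM fun j : ℕ => ((Nat.factorial j : ℝ)⁻¹) • convPow M j

/-- Total variation distance. -/
noncomputable def tvdist (M V : SignedMeasure G) : ℝ := tvnorm (M - V) / 2

/-!
Convolution makes the finite signed measures a commutative ring with unit `δ₀`: `sconv M V` can
be computed from any representations `M = P - N`, `V = Q - R` by finite measures, which reduces
the ring axioms to those of the convolution of finite measures. The identity is then a ring
identity, proved by induction on `n`: with `E = F - D`, both sides `X n` satisfy `X 0 = 0` and
`X (n + 1) = F * X n + C(n, k) • E ^ (k + 1) * D ^ (n - k)`, the left one by Pascal's rule.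
-/

open Finset

theorem sum_range_choose_succ_smul_pow {R : Type*} [CommSemiring R] (a b : R) (n k : ℕ) :
    ∑ m ∈ range (k + 1), (n + 1).choose m • (a ^ (n + 1 - m) * b ^ m)
        + n.choose k • (a ^ (n - k) * b ^ (k + 1))
      = (a + b) * ∑ m ∈ range (k + 1), n.choose m • (a ^ (n - m) * b ^ m) := by
  induction k with
  | zero =>
    simp only [zero_add, range_one, sum_singleton, Nat.choose_zero_right, tsub_zero, pow_zero,
      pow_one, mul_one, one_smul]
    ring
  | succ k ih =>
    rw [sum_range_succ, sum_range_succ _ (k + 1), mul_add, ← ih, Nat.choose_succ_succ',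
      Nat.add_sub_add_right]
    rcases lt_or_ge n (k + 1) with hn | hn
    · simp [Nat.choose_eq_zero_of_lt hn]
    · obtain ⟨j, rfl⟩ := Nat.exists_eq_add_of_le hn
      rw [show k + 1 + j - k = j + 1 by omega, show k + 1 + j - (k + 1) = j by omega]
      ring

theorem sum_Icc_choose_pred_smul_succ {R : Type*} [Semiring R] (f c d : R) (n k : ℕ) :
    ∑ m ∈ Icc (k + 1) (n + 1), (m - 1).choose k • (f ^ (n + 1 - m) * c * d ^ (m - k - 1))
      = f * ∑ m ∈ Icc (k + 1) n, (m - 1).choose k • (f ^ (n - m) * c * d ^ (m - k - 1))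
        + n.choose k • (c * d ^ (n - k)) := by
  rcases lt_or_ge n k with hn | hn
  · simp [Nat.choose_eq_zero_of_lt hn, Icc_eq_empty_of_lt, hn, Nat.lt_succ_of_lt hn]
  rw [sum_Icc_succ_top (by omega), mul_sum, Nat.sub_self, pow_zero, one_mul,
    show n + 1 - k - 1 = n - k by omega]
  congr 1
  refine sum_congr rfl fun m hm => ?_
  rw [mul_smul_comm, Nat.sub_add_comm (mem_Icc.mp hm).2, pow_succ', mul_assoc, mul_assoc,
    mul_assoc]

theorem bergstrom_identity {R : Type*} [CommRing R] (f d : R) (n k : ℕ) :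
    f ^ n - ∑ m ∈ range (k + 1), n.choose m • (d ^ (n - m) * (f - d) ^ m)
      = ∑ m ∈ Icc (k + 1) n,
          (m - 1).choose k • (f ^ (n - m) * (f - d) ^ (k + 1) * d ^ (m - k - 1)) := by
  induction n with
  | zero => simp [sum_range_succ']
  | succ n ih =>
    have hP := sum_range_choose_succ_smul_pow d (f - d) n k
    rw [add_sub_cancel] at hP
    rw [sum_Icc_choose_pred_smul_succ, ← ih]
    linear_combination -hP

omit [AddCommMonoid G] in
theorem toJordanDecomposition_posPart_sub_negPart (M : SignedMeasure G) :
    M.toJordanDecomposition.posPart.toSignedMeasure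
      - M.toJordanDecomposition.negPart.toSignedMeasure = M :=
  M.toSignedMeasure_toJordanDecomposition

section ConvolutionRing

variable [MeasurableAdd₂ G]

noncomputable def convSM (P Q : Measure G) [IsFiniteMeasure P] [IsFiniteMeasure Q] :
    SignedMeasure G :=
  (P ∗ Q).toSignedMeasure

theorem convSM_comm (P Q : Measure G) [IsFiniteMeasure P] [IsFiniteMeasure Q] :
    convSM P Q = convSM Q P :=
  Measure.toSignedMeasure_congr (Measure.conv_comm P Q)

theorem convSM_add_left (P P' Q : Measure G) [IsFiniteMeasure P] [IsFiniteMeasure P']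
    [IsFiniteMeasure Q] : convSM (P + P') Q = convSM P Q + convSM P' Q := by
  rw [convSM, Measure.toSignedMeasure_congr (Measure.add_conv P P' Q),
    Measure.toSignedMeasure_add]
  rfl

theorem convSM_add_right (P Q Q' : Measure G) [IsFiniteMeasure P] [IsFiniteMeasure Q]
    [IsFiniteMeasure Q'] : convSM P (Q + Q') = convSM P Q + convSM P Q' := by
  rw [convSM_comm, convSM_add_left, convSM_comm Q, convSM_comm Q']

theorem convSM_assoc (P Q R : Measure G) [IsFiniteMeasure P] [IsFiniteMeasure Q]
    [IsFiniteMeasure R] : convSM (P ∗ Q) R = convSM P (Q ∗ R) :=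
  Measure.toSignedMeasure_congr (Measure.conv_assoc P Q R)

omit [MeasurableAdd₂ G] in
theorem convSM_zero_left (Q : Measure G) [IsFiniteMeasure Q] : convSM 0 Q = 0 := by
  rw [convSM, Measure.toSignedMeasure_congr (Measure.zero_conv Q), Measure.toSignedMeasure_zero]

theorem convSM_dirac_zero_right (Q : Measure G) [IsFiniteMeasure Q] :
    convSM Q (Measure.dirac 0) = Q.toSignedMeasure :=
  Measure.toSignedMeasure_congr (Measure.conv_dirac_zero Q)

theorem convSM_sub_left_congr {P N P' N' : Measure G} [IsFiniteMeasure P] [IsFiniteMeasure N]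
    [IsFiniteMeasure P'] [IsFiniteMeasure N']
    (h : P.toSignedMeasure - N.toSignedMeasure = P'.toSignedMeasure - N'.toSignedMeasure)
    (Q : Measure G) [IsFiniteMeasure Q] :
    convSM P Q - convSM N Q = convSM P' Q - convSM N' Q := by
  rw [sub_eq_sub_iff_add_eq_add, ← Measure.toSignedMeasure_add, ← Measure.toSignedMeasure_add,
    Measure.toSignedMeasure_eq_toSignedMeasure_iff] at h
  rw [sub_eq_sub_iff_add_eq_add, ← convSM_add_left, ← convSM_add_left]
  congr 1

theorem convSM_sub_right_congr {Q R Q' R' : Measure G} [IsFiniteMeasure Q] [IsFiniteMeasure R]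
    [IsFiniteMeasure Q'] [IsFiniteMeasure R']
    (h : Q.toSignedMeasure - R.toSignedMeasure = Q'.toSignedMeasure - R'.toSignedMeasure)
    (P : Measure G) [IsFiniteMeasure P] :
    convSM P Q - convSM P R = convSM P Q' - convSM P R' := by
  simp only [convSM_comm P]
  exact convSM_sub_left_congr h P

omit [MeasurableAdd₂ G] in
theorem sconv_eq_convSM (M V : SignedMeasure G) :
    sconv M V = convSM M.toJordanDecomposition.posPart V.toJordanDecomposition.posPart
        + convSM M.toJordanDecomposition.negPart V.toJordanDecomposition.negPart
      - (convSM M.toJordanDecomposition.posPart V.toJordanDecomposition.negPart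
        + convSM M.toJordanDecomposition.negPart V.toJordanDecomposition.posPart) := by
  rw [sconv, Measure.toSignedMeasure_add, Measure.toSignedMeasure_add]
  rfl

theorem sconv_eq_of_eq_sub {M V : SignedMeasure G} {P N Q R : Measure G} [IsFiniteMeasure P]
    [IsFiniteMeasure N] [IsFiniteMeasure Q] [IsFiniteMeasure R]
    (hM : M = P.toSignedMeasure - N.toSignedMeasure)
    (hV : V = Q.toSignedMeasure - R.toSignedMeasure) :
    sconv M V = convSM P Q + convSM N R - (convSM P R + convSM N Q) := by
  have hM' := (toJordanDecomposition_posPart_sub_negPart M).trans hM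
  have hV' := (toJordanDecomposition_posPart_sub_negPart V).trans hV
  set A := M.toJordanDecomposition.posPart
  set B := M.toJordanDecomposition.negPart
  set C := V.toJordanDecomposition.posPart
  set E := V.toJordanDecomposition.negPart
  calc sconv M V = (convSM A C - convSM B C) - (convSM A E - convSM B E) := by
        rw [sconv_eq_convSM]; abel
    _ = (convSM P C - convSM P E) - (convSM N C - convSM N E) := by
        rw [convSM_sub_left_congr hM' C, convSM_sub_left_congr hM' E]; abel
    _ = convSM P Q + convSM N R - (convSM P R + convSM N Q) := by
        rw [convSM_sub_right_congr hV' P, convSM_sub_right_congr hV' N]; abel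

theorem sconv_comm (M V : SignedMeasure G) : sconv M V = sconv V M := by
  rw [sconv_eq_convSM, sconv_eq_convSM, convSM_comm M.toJordanDecomposition.posPart,
    convSM_comm M.toJordanDecomposition.negPart, convSM_comm M.toJordanDecomposition.posPart,
    convSM_comm M.toJordanDecomposition.negPart]
  abel

theorem sconv_add_left (M M' V : SignedMeasure G) :
    sconv (M + M') V = sconv M V + sconv M' V := by
  have hMM' : M + M' =
      (M.toJordanDecomposition.posPart + M'.toJordanDecomposition.posPart).toSignedMeasure
        - (M.toJordanDecomposition.negPart + M'.toJordanDecomposition.negPart).toSignedMeasure := by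
    rw [Measure.toSignedMeasure_add, Measure.toSignedMeasure_add, add_sub_add_comm,
      toJordanDecomposition_posPart_sub_negPart M, toJordanDecomposition_posPart_sub_negPart M']
  rw [sconv_eq_of_eq_sub hMM' (toJordanDecomposition_posPart_sub_negPart V).symm,
    sconv_eq_convSM M V, sconv_eq_convSM M' V]
  simp only [convSM_add_left]
  abel

theorem sconv_zero_left (V : SignedMeasure G) : sconv 0 V = 0 := by
  have h0 : (0 : SignedMeasure G)
      = (0 : Measure G).toSignedMeasure - (0 : Measure G).toSignedMeasure :=
    (sub_self _).symm
  rw [sconv_eq_of_eq_sub h0 (toJordanDecomposition_posPart_sub_negPart V).symm]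
  simp only [convSM_zero_left]
  abel

theorem sconv_one_right (M : SignedMeasure G) : sconv M (diracSM 0) = M := by
  have h1 : diracSM (0 : G)
      = (Measure.dirac 0).toSignedMeasure - (0 : Measure G).toSignedMeasure := by
    rw [Measure.toSignedMeasure_zero, sub_zero, diracSM]
  rw [sconv_eq_of_eq_sub (toJordanDecomposition_posPart_sub_negPart M).symm h1, convSM_comm _ 0,
    convSM_comm _ 0, convSM_zero_left, convSM_zero_left, convSM_dirac_zero_right,
    convSM_dirac_zero_right, add_zero, zero_add]
  exact toJordanDecomposition_posPart_sub_negPart M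

theorem sconv_assoc (M V W : SignedMeasure G) :
    sconv (sconv M V) W = sconv M (sconv V W) := by
  set A := M.toJordanDecomposition.posPart
  set B := M.toJordanDecomposition.negPart
  set C := V.toJordanDecomposition.posPart
  set E := V.toJordanDecomposition.negPart
  set X := W.toJordanDecomposition.posPart
  set Y := W.toJordanDecomposition.negPart
  have hMV : sconv M V
      = (A ∗ C + B ∗ E).toSignedMeasure - (A ∗ E + B ∗ C).toSignedMeasure := rfl
  have hVW : sconv V W
      = (C ∗ X + E ∗ Y).toSignedMeasure - (C ∗ Y + E ∗ X).toSignedMeasure := rfl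
  rw [sconv_eq_of_eq_sub hMV (toJordanDecomposition_posPart_sub_negPart W).symm,
    sconv_eq_of_eq_sub (toJordanDecomposition_posPart_sub_negPart M).symm hVW]
  simp only [convSM_add_left, convSM_add_right, convSM_assoc]
  abel

noncomputable abbrev convCommRing : CommRing (SignedMeasure G) where
  __ := (inferInstance : AddCommGroup (SignedMeasure G))
  mul := sconv
  one := diracSM 0
  -- so that `convPow M n = M ^ n` holds by `rfl`
  npow n M := convPow M n
  npow_zero _ := rfl
  npow_succ _ _ := rfl
  mul_assoc := sconv_assoc
  one_mul M := (sconv_comm _ M).trans (sconv_one_right M)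
  mul_one := sconv_one_right
  left_distrib M V W := by
    change sconv M (V + W) = sconv M V + sconv M W
    rw [sconv_comm, sconv_add_left, sconv_comm V, sconv_comm W]
  right_distrib := sconv_add_left
  mul_comm := sconv_comm
  zero_mul := sconv_zero_left
  mul_zero M := (sconv_comm M 0).trans (sconv_zero_left M)

end ConvolutionRing

theorem stmt18_general (d : ℕ) (μ : MeasureTheory.Measure (Fin d → ℝ))
    [MeasureTheory.IsProbabilityMeasure μ] (D : MeasureTheory.SignedMeasure (Fin d → ℝ))
    (n k : ℕ) :
    convPow μ.toSignedMeasure n -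
        ∑ m ∈ Finset.range (k + 1), (n.choose m : ℝ) •
          sconv (convPow D (n - m)) (convPow (μ.toSignedMeasure - D) m)
      = ∑ m ∈ Finset.Icc (k + 1) n, ((m - 1).choose k : ℝ) •
          sconv (sconv (convPow μ.toSignedMeasure (n - m))
            (convPow (μ.toSignedMeasure - D) (k + 1))) (convPow D (m - k - 1)) := by
  let _ : CommRing (SignedMeasure (Fin d → ℝ)) := convCommRing
  simp only [Nat.cast_smul_eq_nsmul]
  exact bergstrom_identity μ.toSignedMeasure D n k

theorem stmt18 (d : ℕ) (μ : MeasureTheory.Measure (Fin d → ℝ))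
    [MeasureTheory.IsProbabilityMeasure μ] (D : MeasureTheory.SignedMeasure (Fin d → ℝ))
    (hD : D Set.univ = 1) (n k : ℕ) (hk : k + 1 ≤ n) :
    convPow μ.toSignedMeasure n -
        ∑ m ∈ Finset.range (k + 1), (n.choose m : ℝ) •
          sconv (convPow D (n - m)) (convPow (μ.toSignedMeasure - D) m)
      = ∑ m ∈ Finset.Icc (k + 1) n, ((m - 1).choose k : ℝ) •
          sconv (sconv (convPow μ.toSignedMeasure (n - m))
            (convPow (μ.toSignedMeasure - D) (k + 1))) (convPow D (m - k - 1)) :=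
  stmt18_general d μ D n k
end
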